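/- Extremality of the maximal temperature for rectangular tori: for all α > 0 and t > 0, θ₃(e^{-πtα²}) · θ₃(e^{-πtα^{-2}}) ≥ θ₃(e^{-πt})², with equality if and only if α = 1. -/

import Mathlib

noncomputable section

/-- Theta-null `θ₂(q) = ∑_{k∈ℤ} q^{(k+1/2)²}`. -/
def theta2 (q : ℝ) : ℝ := ∑' k : ℤ, q ^ (((k : ℝ) + 1/2)^2)

/-- Theta-null `θ₃(q) = ∑_{k∈ℤ} q^{k²}`. -/
def theta3 (q : ℝ) : ℝ := ∑' k : ℤ, q ^ (k^2)

/-- Theta-null `θ₄(q) = ∑_{k∈ℤ} (-1)^k q^{k²}`. -/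
def theta4 (q : ℝ) : ℝ := ∑' k : ℤ, (-1 : ℝ) ^ k * q ^ (k^2)

/-- Jacobi theta function `θ₃(z,q) = ∑_{k∈ℤ} q^{k²} e^{2πikz}` (real-valued for real z, q∈(0,1)). -/
def jTheta3 (z q : ℝ) : ℝ :=
  (∑' k : ℤ, (q : ℂ) ^ (k^2) * Complex.exp (2 * Real.pi * Complex.I * k * z)).re

/-- Jacobi theta function as a complex number. -/
def jTheta3C (z q : ℝ) : ℂ :=
  ∑' k : ℤ, (q : ℂ) ^ (k^2) * Complex.exp (2 * Real.pi * Complex.I * k * z)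

/-- Gauss hypergeometric series `₂F₁(a,b;c;x)`. -/
def hyp2F1 (a b c x : ℝ) : ℝ :=
  ∑' n : ℕ, ((ascPochhammer ℝ n).eval a * (ascPochhammer ℝ n).eval b /
    (ascPochhammer ℝ n).eval c) * x ^ n / (n.factorial : ℝ)

/-- Borwein cubic theta function `a(q)`. -/
def borA (q : ℝ) : ℝ := ∑' p : ℤ × ℤ, q ^ (p.1^2 + p.1 * p.2 + p.2^2)

/-- Borwein cubic theta function `b(q)` (real-valued). -/
def borB (q : ℝ) : ℝ :=
  (∑' p : ℤ × ℤ, (q : ℂ) ^ (p.1^2 + p.1 * p.2 + p.2^2) *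
    Complex.exp (2 * Real.pi * Complex.I * (((p.1 : ℝ) - (p.2 : ℝ)) / 3))).re

/-- Borwein cubic theta function `c(q)`. -/
def borC (q : ℝ) : ℝ :=
  ∑' p : ℤ × ℤ, q ^ ((((p.1 : ℝ)) + 1/3)^2 + ((p.1 : ℝ) + 1/3) * ((p.2 : ℝ) + 1/3) +
    (((p.2 : ℝ)) + 1/3)^2)

/-- Periodized Gaussian (heat kernel) on the torus ℝ²/(Sℤ²). -/
def heatK (S : Matrix.SpecialLinearGroup (Fin 2) ℝ) (t : ℝ) (z : Fin 2 → ℝ) : ℝ :=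
  (1/t) * ∑' l : Fin 2 → ℤ,
    Real.exp (-(Real.pi / t) *
      (((S : Matrix (Fin 2) (Fin 2) ℝ).mulVec (fun i => (l i : ℝ) + z i) 0)^2 +
       ((S : Matrix (Fin 2) (Fin 2) ℝ).mulVec (fun i => (l i : ℝ) + z i) 1)^2))

end


/-!
Write `S(x) = θ₃(e^{-πx})` and `ψ(s) = log S(eˢ)`. With `s = log t` and `d = 2 log α` the product
is `exp (ψ(s + d) + ψ(s - d))`, so the claim is the strict convexity of `ψ`. Since
`ψ'(s) = -H(eˢ)` with `H(x) = π x S₁(x) / S(x)`, `S₁(x) = ∑ k² e^{-πxk²}`, this means that `H` is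
strictly decreasing on `(0, ∞)`. Differentiating Jacobi's functional equation `S(1/x) = √x S(x)`
gives `H(1/x) = 1/2 - H(x)`, which reduces this to `x ≥ 1`; there `e^{-πx} < 1/4`, and crude
bounds on the moments `∑ k^{2j} e^{-πxk²}` show that `H' < 0`.
-/

open Real Set

noncomputable def thetaMoment (j : ℕ) (x : ℝ) : ℝ :=
  ∑' k : ℤ, ((k : ℝ) ^ 2) ^ j * rexp (-π * x * k ^ 2)

lemma summable_thetaMoment (j : ℕ) {x : ℝ} (hx : 0 < x) :
    Summable fun k : ℤ ↦ ((k : ℝ) ^ 2) ^ j * rexp (-π * x * k ^ 2) := by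
  convert summable_pow_mul_jacobiTheta₂_term_bound 0 hx (2 * j) using 2 with k
  rw [pow_mul, Int.cast_abs, sq_abs]
  ring_nf

lemma hasDerivAt_thetaMoment (j : ℕ) {x : ℝ} (hx : 0 < x) :
    HasDerivAt (thetaMoment j) (-π * thetaMoment (j + 1) x) x := by
  have hterm (k : ℤ) (y : ℝ) : HasDerivAt (fun y ↦ ((k : ℝ) ^ 2) ^ j * rexp (-π * y * k ^ 2))
      (-π * (((k : ℝ) ^ 2) ^ (j + 1) * rexp (-π * y * k ^ 2))) y := by
    refine ((((hasDerivAt_id' y).const_mul (-π)).mul_const ((k : ℝ) ^ 2)).exp.const_mul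
      (((k : ℝ) ^ 2) ^ j)).congr_deriv ?_
    ring
  have hbound (k : ℤ) (y : ℝ) (hy : y ∈ Ioi (x / 2)) :
      ‖-π * (((k : ℝ) ^ 2) ^ (j + 1) * rexp (-π * y * k ^ 2))‖ ≤
        π * (((k : ℝ) ^ 2) ^ (j + 1) * rexp (-π * (x / 2) * k ^ 2)) := by
    rw [norm_mul, norm_neg, Real.norm_of_nonneg pi_pos.le,
      Real.norm_of_nonneg (by positivity)]
    have hexp : -π * y * k ^ 2 ≤ -π * (x / 2) * k ^ 2 := by
      have := mul_nonneg (mul_nonneg pi_pos.le (sq_nonneg (k : ℝ)))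
        (sub_nonneg.2 (mem_Ioi.mp hy).le)
      linarith
    gcongr
  have hx2 : x ∈ Ioi (x / 2) := half_lt_self hx
  have := hasDerivAt_tsum_of_isPreconnected
    ((summable_thetaMoment (j + 1) (half_pos hx)).mul_left π) isOpen_Ioi isPreconnected_Ioi
    (fun k y _ ↦ hterm k y) hbound hx2 (summable_thetaMoment j hx) hx2
  rwa [tsum_mul_left] at this

lemma one_le_thetaMoment_zero {x : ℝ} (hx : 0 < x) : 1 ≤ thetaMoment 0 x := by
  simpa [thetaMoment] using (summable_thetaMoment 0 hx).le_tsum 0 fun k _ ↦ by positivity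

lemma thetaMoment_pos (j : ℕ) {x : ℝ} (hx : 0 < x) : 0 < thetaMoment j x :=
  (summable_thetaMoment j hx).tsum_pos (fun k ↦ by positivity) 1 (by positivity)

lemma thetaMoment_one_le_two {x : ℝ} (hx : 0 < x) : thetaMoment 1 x ≤ thetaMoment 2 x := by
  refine (summable_thetaMoment 1 hx).tsum_le_tsum (fun k ↦ ?_) (summable_thetaMoment 2 hx)
  refine mul_le_mul_of_nonneg_right ?_ (exp_pos _).le
  rcases eq_or_ne k 0 with rfl | hk
  · simp
  · exact pow_le_pow_right₀ (by exact_mod_cast (one_le_sq_iff_one_le_abs k).2 (Int.one_le_abs hk))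
      one_le_two

lemma exp_neg_pi_mul_lt_quarter {x : ℝ} (hx : 1 ≤ x) : rexp (-π * x) < 1 / 4 := by
  have h4 : 4 < rexp (π * x) := calc
    (4 : ℝ) < π + 1 := by linarith [pi_gt_three]
    _ < rexp π := add_one_lt_exp pi_pos.ne'
    _ ≤ rexp (π * x) := exp_le_exp.2 (le_mul_of_one_le_right pi_pos.le hx)
  rw [neg_mul, exp_neg, one_div]
  exact inv_strictAnti₀ four_pos h4

lemma sq_mul_exp_le_geometric {x : ℝ} (hx : 0 ≤ x) (n : ℕ) :
    ((n + 1 : ℝ) ^ 2) * rexp (-π * x * (n + 1) ^ 2) ≤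
      rexp (-π * x) * (4 * rexp (-π * x) ^ 2) ^ n := by
  set q := rexp (-π * x)
  have hq : q ≤ 1 := exp_le_one_iff.2 (by nlinarith [pi_pos])
  have hpow : rexp (-π * x * (n + 1) ^ 2) ≤ q ^ (2 * n + 1) := calc
    rexp (-π * x * (n + 1) ^ 2) = q ^ ((n + 1) ^ 2) := by
      rw [← exp_nat_mul]; push_cast; ring_nf
    _ ≤ q ^ (2 * n + 1) := pow_le_pow_of_le_one (exp_pos _).le hq (by nlinarith)
  have hsq : (n + 1 : ℝ) ^ 2 ≤ 4 ^ n := by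
    calc (n + 1 : ℝ) ^ 2 ≤ ((2 : ℝ) ^ n) ^ 2 := by
          gcongr
          exact_mod_cast Nat.lt_two_pow_self
      _ = 4 ^ n := by rw [← pow_mul, mul_comm, pow_mul]; norm_num
  calc ((n + 1 : ℝ) ^ 2) * rexp (-π * x * (n + 1) ^ 2) ≤ 4 ^ n * q ^ (2 * n + 1) := by gcongr
    _ = q * (4 * q ^ 2) ^ n := by ring

lemma thetaMoment_one_lt_two_thirds {x : ℝ} (hx : 1 ≤ x) : thetaMoment 1 x < 2 / 3 := by
  set q := rexp (-π * x)
  have hq : q < 1 / 4 := exp_neg_pi_mul_lt_quarter hx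
  have hq0 : 0 < q := exp_pos _
  have hratio : 4 * q ^ 2 < 1 := by nlinarith
  have hsplit : thetaMoment 1 x =
      2 * ∑' n : ℕ, ((n + 1 : ℝ) ^ 2) * rexp (-π * x * (n + 1) ^ 2) := by
    rw [thetaMoment, tsum_int_eq_zero_add_two_mul_tsum_pnat (fun k ↦ by simp)
      (summable_thetaMoment 1 (by linarith)), tsum_pnat_eq_tsum_succ
      (f := fun n : ℕ ↦ (((n : ℤ) : ℝ) ^ 2) ^ 1 * rexp (-π * x * ((n : ℤ) : ℝ) ^ 2))]
    simp
  have hgeom : Summable fun n : ℕ ↦ q * (4 * q ^ 2) ^ n :=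
    (summable_geometric_of_lt_one (by positivity) hratio).mul_left q
  have htail := Summable.tsum_le_tsum (sq_mul_exp_le_geometric (by linarith))
    (hgeom.of_nonneg_of_le (fun n ↦ by positivity) (sq_mul_exp_le_geometric (by linarith))) hgeom
  rw [tsum_mul_left, tsum_geometric_of_lt_one (by positivity) hratio] at htail
  rw [hsplit]
  have : q * (1 - 4 * q ^ 2)⁻¹ < 1 / 3 := by
    rw [← div_eq_mul_inv, div_lt_iff₀ (by linarith)]
    nlinarith
  linarith

open Complex in
lemma thetaMoment_zero_eq_jacobiTheta (x : ℝ) : (thetaMoment 0 x : ℂ) = jacobiTheta (x * I) := by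
  rw [thetaMoment, ofReal_tsum, jacobiTheta]
  refine tsum_congr fun k ↦ ?_
  push_cast
  ring_nf
  rw [I_sq]
  ring_nf

open Complex in
lemma thetaMoment_zero_inv {x : ℝ} (hx : 0 < x) : thetaMoment 0 x⁻¹ = √x * thetaMoment 0 x := by
  have h := jacobiTheta_S_smul ⟨x * I, by simpa using hx⟩
  rw [UpperHalfPlane.modular_S_smul] at h
  simp only at h
  have hinv : (-((x : ℂ) * I))⁻¹ = ((x⁻¹ : ℝ) : ℂ) * I := by
    field_simp
    push_cast
    rw [I_sq]
    ring
  have hsqrt : (-I * ((x : ℂ) * I)) ^ (1 / 2 : ℂ) = (√x : ℂ) := by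
    rw [show -I * ((x : ℂ) * I) = x by ring_nf; rw [I_sq]; ring, sqrt_eq_rpow,
      ofReal_cpow hx.le]
    norm_num
  rw [hinv, hsqrt, ← thetaMoment_zero_eq_jacobiTheta, ← thetaMoment_zero_eq_jacobiTheta] at h
  exact_mod_cast h

lemma thetaMoment_one_mul_zero_lt {x : ℝ} (hx : 1 ≤ x) :
    thetaMoment 1 x * thetaMoment 0 x <
      π * x * (thetaMoment 2 x * thetaMoment 0 x - thetaMoment 1 x ^ 2) := by
  have hx0 : 0 < x := by linarith
  have hS₁ := thetaMoment_pos 1 hx0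
  have hS₁_lt := thetaMoment_one_lt_two_thirds hx
  have hS₀ := one_le_thetaMoment_zero hx0
  have hS₁₂ := thetaMoment_one_le_two hx0
  have hπx : 3 ≤ π * x := by nlinarith [pi_gt_three]
  -- `S₂ ≥ S₁` bounds the variance term by `S₁ (S₀ - S₁)`; then `3 S₁ < 2 ≤ 2 S₀` suffices.
  calc thetaMoment 1 x * thetaMoment 0 x
      < 3 * (thetaMoment 1 x * (thetaMoment 0 x - thetaMoment 1 x)) := by nlinarith
    _ ≤ π * x * (thetaMoment 1 x * (thetaMoment 0 x - thetaMoment 1 x)) := by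
      gcongr
      nlinarith
    _ ≤ π * x * (thetaMoment 2 x * thetaMoment 0 x - thetaMoment 1 x ^ 2) := by
      gcongr
      nlinarith

/-- `H(x) = -x S'(x) / S(x)` for `S = thetaMoment 0`. -/
noncomputable def thetaElasticity (x : ℝ) : ℝ := π * x * thetaMoment 1 x / thetaMoment 0 x

lemma hasDerivAt_thetaElasticity {x : ℝ} (hx : 0 < x) :
    HasDerivAt thetaElasticity
      (π * (thetaMoment 1 x * thetaMoment 0 x -
        π * x * (thetaMoment 2 x * thetaMoment 0 x - thetaMoment 1 x ^ 2)) /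
        thetaMoment 0 x ^ 2) x := by
  have hnum : HasDerivAt (fun y ↦ π * y * thetaMoment 1 y)
      (π * thetaMoment 1 x + π * x * (-π * thetaMoment 2 x)) x :=
    ((hasDerivAt_id' x).const_mul π).mul (hasDerivAt_thetaMoment 1 hx) |>.congr_deriv (by ring)
  exact (hnum.div (hasDerivAt_thetaMoment 0 hx) (thetaMoment_pos 0 hx).ne').congr_deriv (by ring)

lemma thetaElasticity_strictAntiOn_Ici_one : StrictAntiOn thetaElasticity (Ici 1) := by
  refine strictAntiOn_of_deriv_neg (convex_Ici 1) (fun x hx ↦ ?_) fun x hx ↦ ?_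
  · exact (hasDerivAt_thetaElasticity (zero_lt_one.trans_le hx)).continuousAt.continuousWithinAt
  · rw [interior_Ici] at hx
    rw [(hasDerivAt_thetaElasticity (zero_lt_one.trans hx)).deriv]
    exact div_neg_of_neg_of_pos (mul_neg_of_pos_of_neg pi_pos
      (sub_neg.2 (thetaMoment_one_mul_zero_lt hx.out.le)))
      (pow_pos (thetaMoment_pos 0 (zero_lt_one.trans hx)) 2)

lemma thetaElasticity_inv {x : ℝ} (hx : 0 < x) :
    thetaElasticity x⁻¹ = 1 / 2 - thetaElasticity x := by
  -- differentiate `thetaMoment_zero_inv` at `x`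
  have hfun : (fun y ↦ √y * thetaMoment 0 y) =ᶠ[nhds x] thetaMoment 0 ∘ Inv.inv :=
    (eventually_gt_nhds hx).mono fun y hy ↦ (thetaMoment_zero_inv hy).symm
  have hderiv := (((hasDerivAt_thetaMoment 0 (inv_pos.2 hx)).comp x
    (hasDerivAt_inv hx.ne')).congr_of_eventuallyEq hfun).unique
    ((hasDerivAt_sqrt hx.ne').mul (hasDerivAt_thetaMoment 0 hx))
  have hS₀ := (thetaMoment_pos 0 hx).ne'
  have hsqrt : 0 < √x := sqrt_pos.2 hx
  rw [thetaElasticity, thetaElasticity, thetaMoment_zero_inv hx]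
  have hs : √x ^ 2 = x := sq_sqrt hx.le
  simp only [zero_add] at hderiv
  field_simp at hderiv ⊢
  refine mul_right_cancel₀ hsqrt.ne' ?_
  linear_combination hderiv - x * thetaMoment 0 x * hs

lemma thetaElasticity_strictAntiOn : StrictAntiOn thetaElasticity (Ioi 0) := by
  have hsmall : StrictAntiOn thetaElasticity (Ioc 0 1) := by
    intro a ha b hb hab
    have hflip (c : ℝ) (hc : 0 < c) : thetaElasticity c = 1 / 2 - thetaElasticity c⁻¹ := by
      simpa using thetaElasticity_inv (inv_pos.2 hc)
    rw [hflip a ha.1, hflip b hb.1]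
    have := thetaElasticity_strictAntiOn_Ici_one ((one_le_inv₀ hb.1).2 hb.2)
      ((one_le_inv₀ ha.1).2 ha.2) (inv_strictAnti₀ ha.1 hab)
    linarith
  simpa [Ioc_union_Ici_eq_Ioi zero_lt_one] using
    hsmall.union thetaElasticity_strictAntiOn_Ici_one (isGreatest_Ioc zero_lt_one) isLeast_Ici

noncomputable def logTheta (s : ℝ) : ℝ := log (thetaMoment 0 (rexp s))

lemma hasDerivAt_logTheta (s : ℝ) : HasDerivAt logTheta (-thetaElasticity (rexp s)) s := by
  have hS₀ := (thetaMoment_pos 0 (exp_pos s)).ne'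
  refine (((hasDerivAt_thetaMoment 0 (exp_pos s)).comp s (hasDerivAt_exp s)).log hS₀).congr_deriv
    ?_
  rw [thetaElasticity, Function.comp_apply]
  ring

lemma strictConvexOn_logTheta : StrictConvexOn ℝ univ logTheta := by
  refine StrictMono.strictConvexOn_univ_of_deriv
    (continuous_iff_continuousAt.2 fun s ↦ (hasDerivAt_logTheta s).continuousAt) ?_
  rw [funext fun s ↦ (hasDerivAt_logTheta s).deriv]
  intro a b hab
  exact neg_lt_neg (thetaElasticity_strictAntiOn (exp_pos a) (exp_pos b) (exp_lt_exp.2 hab))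

lemma thetaMoment_zero_sq_lt_mul {t a : ℝ} (ht : 0 < t) (ha : 0 < a) (ha1 : a ≠ 1) :
    thetaMoment 0 t ^ 2 < thetaMoment 0 (t * a) * thetaMoment 0 (t * a⁻¹) := by
  have hconv := strictConvexOn_logTheta.2 (mem_univ (log t + log a)) (mem_univ (log t - log a))
    (fun h ↦ log_ne_zero_of_pos_of_ne_one ha ha1 (by linarith)) one_half_pos one_half_pos
    (add_halves 1)
  have hmid : (1 / 2 : ℝ) • (log t + log a) + (1 / 2 : ℝ) • (log t - log a) = log t := by
    simp only [smul_eq_mul]; ring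
  rw [hmid] at hconv
  simp only [logTheta, smul_eq_mul, exp_add, exp_sub, exp_log ht, exp_log ha] at hconv
  have h₀ := thetaMoment_pos 0 ht
  have hta := thetaMoment_pos 0 (mul_pos ht ha)
  have hta' := thetaMoment_pos 0 (mul_pos ht (inv_pos.2 ha))
  rw [← log_lt_log_iff (by positivity) (by positivity), log_pow, log_mul hta.ne' hta'.ne']
  rw [div_eq_mul_inv t a] at hconv
  push_cast
  linarith

lemma theta3_exp_neg_pi_mul (x : ℝ) : theta3 (rexp (-π * x)) = thetaMoment 0 x := by
  refine tsum_congr fun k ↦ ?_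
  rw [pow_zero, one_mul, ← rpow_intCast, ← exp_mul]
  push_cast
  ring_nf

theorem theta3_product_min (α t : ℝ) (hα : 0 < α) (ht : 0 < t) :
    theta3 (Real.exp (-Real.pi * t)) ^ 2 ≤
      theta3 (Real.exp (-Real.pi * t * α^2)) * theta3 (Real.exp (-Real.pi * t * α^(-2:ℤ))) ∧
    (theta3 (Real.exp (-Real.pi * t * α^2)) * theta3 (Real.exp (-Real.pi * t * α^(-2:ℤ))) =
        theta3 (Real.exp (-Real.pi * t)) ^ 2 ↔ α = 1) := by
  have hθ (a : ℝ) : theta3 (rexp (-π * t * a)) = thetaMoment 0 (t * a) := by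
    rw [mul_assoc, theta3_exp_neg_pi_mul]
  rw [hθ, hθ, theta3_exp_neg_pi_mul, zpow_neg, zpow_ofNat]
  rcases eq_or_ne α 1 with rfl | hα1
  · simp [sq]
  · have hlt := thetaMoment_zero_sq_lt_mul ht (pow_pos hα 2)
      (by rwa [Ne, pow_eq_one_iff_of_nonneg hα.le two_ne_zero])
    exact ⟨hlt.le, iff_of_false hlt.ne' hα1⟩
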